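/- The function g(κ) = κ(1-Φ(κ))/Φ'(κ), where Φ is the standard normal CDF and Φ' its density, is strictly increasing on ℝ, satisfies g(0)=0, tends to -∞ as κ → -∞, and tends to 1 as κ → +∞. -/

import Mathlib

open Real MeasureTheory Filter

/-- The standard normal CDF. -/
noncomputable def Phi (x : ℝ) : ℝ := ∫ t in Set.Iic x, (Real.sqrt (2 * Real.pi))⁻¹ * Real.exp (-t ^ 2 / 2)

/-- The standard normal density. -/
noncomputable def phi (x : ℝ) : ℝ := (Real.sqrt (2 * Real.pi))⁻¹ * Real.exp (-x ^ 2 / 2)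

/-- The function `g(κ) = κ(1-Φ(κ))/Φ'(κ)`. -/
noncomputable def g (κ : ℝ) : ℝ := κ * (1 - Phi κ) / phi κ

/-!
Write `Q = 1 - Φ`, so that `Q' = -φ` and `φ' = -κ φ`. Then `g' = ((1 + κ²) Q - κ φ) / φ`, so `g`
is strictly increasing by the Mills-ratio bound `κ φ / (1 + κ²) < Q`. Together with the other
Mills-ratio bound `κ Q < φ` for `κ > 0`, this squeezes `g` between `κ² / (1 + κ²)` and `1` at `+∞`.
Each bound holds because the difference of its two sides is strictly decreasing (with derivative
`-2 φ / (1 + κ²)²`, resp. `-φ / κ²`) and tends to `0` at `+∞`. For `κ ≤ 0`, `g` lies below the line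
through the origin of slope `Q(0) / φ(0) > 0`.
-/

open Set Topology

theorem StrictAntiOn.lt_of_tendsto_atTop {α β : Type*} [LinearOrder α] [NoMaxOrder α]
    [TopologicalSpace β] [Preorder β] [ClosedIicTopology β] {f : α → β} {x : α} {c : β}
    (hf : StrictAntiOn f (Ici x)) (hlim : Tendsto f atTop (𝓝 c)) : c < f x := by
  have : Nonempty α := ⟨x⟩
  obtain ⟨y, hxy⟩ := exists_gt x
  have hc : c ≤ f y := le_of_tendsto hlim <| (eventually_ge_atTop y).mono fun z hyz =>
    hf.antitoneOn hxy.le (hxy.le.trans hyz) hyz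
  exact hc.trans_lt (hf le_rfl hxy.le hxy)

lemma phi_pos (x : ℝ) : 0 < phi x := by
  unfold phi
  positivity

lemma phi_le_phi_zero (x : ℝ) : phi x ≤ phi 0 := by
  unfold phi
  refine mul_le_mul_of_nonneg_left (exp_le_exp.2 ?_) (by positivity)
  nlinarith [sq_nonneg x]

lemma continuous_phi : Continuous phi := by
  unfold phi
  fun_prop

lemma phi_eq_mul_exp (x : ℝ) : phi x = (√(2 * π))⁻¹ * exp (-(1 / 2) * x ^ 2) := by
  rw [phi]
  ring_nf

lemma integrable_phi : Integrable phi := by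
  rw [funext phi_eq_mul_exp]
  exact (integrable_exp_neg_mul_sq (by norm_num : (0 : ℝ) < 1 / 2)).const_mul (√(2 * π))⁻¹

lemma integral_phi : ∫ x, phi x = 1 := by
  simp_rw [phi_eq_mul_exp]
  rw [integral_const_mul, integral_gaussian, show π / (1 / 2) = 2 * π by ring]
  exact inv_mul_cancel₀ (by positivity)

lemma hasDerivAt_phi (x : ℝ) : HasDerivAt phi (-x * phi x) x := by
  have h : HasDerivAt (fun y : ℝ => -y ^ 2 / 2) (-x) x :=
    (((hasDerivAt_pow 2 x).neg).div_const 2).congr_deriv (by ring)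
  exact (h.exp.const_mul (√(2 * π))⁻¹).congr_deriv (by rw [phi]; ring)

lemma tendsto_phi_atTop : Tendsto phi atTop (𝓝 0) := by
  have h : Tendsto (fun x : ℝ => -x ^ 2 / 2) atTop atBot := by
    simp_rw [neg_div]
    exact tendsto_neg_atTop_atBot.comp ((tendsto_pow_atTop two_ne_zero).atTop_div_const two_pos)
  have h' := (tendsto_exp_atBot.comp h).const_mul (√(2 * π))⁻¹
  rwa [mul_zero] at h'

lemma Phi_eq_setIntegral (x : ℝ) : Phi x = ∫ t in Iic x, phi t := rfl

lemma Phi_eq_add_intervalIntegral (x : ℝ) : Phi x = Phi 0 + ∫ t in (0 : ℝ)..x, phi t := by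
  rw [Phi_eq_setIntegral, Phi_eq_setIntegral,
    ← intervalIntegral.integral_Iic_sub_Iic integrable_phi.integrableOn integrable_phi.integrableOn]
  ring

lemma hasDerivAt_Phi (x : ℝ) : HasDerivAt Phi (phi x) x := by
  rw [show Phi = fun y => Phi 0 + ∫ t in (0 : ℝ)..y, phi t from funext Phi_eq_add_intervalIntegral]
  exact (continuous_phi.integral_hasStrictDerivAt 0 x).hasDerivAt.const_add _

lemma hasDerivAt_one_sub_Phi (x : ℝ) : HasDerivAt (fun y => 1 - Phi y) (-phi x) x := by
  simpa using (hasDerivAt_Phi x).const_sub 1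

lemma strictMono_Phi : StrictMono Phi :=
  strictMono_of_deriv_pos fun x => (hasDerivAt_Phi x).deriv ▸ phi_pos x

lemma tendsto_Phi_atTop : Tendsto Phi atTop (𝓝 1) := by
  have hsplit : Phi 0 + ∫ t in Ioi 0, phi t = 1 := by
    rw [Phi_eq_setIntegral, ← compl_Iic, integral_add_compl measurableSet_Iic integrable_phi,
      integral_phi]
  rw [← hsplit]
  refine ((intervalIntegral_tendsto_integral_Ioi 0 integrable_phi.integrableOn tendsto_id).const_add
    (Phi 0)).congr fun x => ?_
  exact (Phi_eq_add_intervalIntegral x).symm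

lemma tendsto_one_sub_Phi_atTop : Tendsto (fun x => 1 - Phi x) atTop (𝓝 0) := by
  simpa using tendsto_Phi_atTop.const_sub 1

lemma Phi_lt_one (x : ℝ) : Phi x < 1 :=
  (strictMono_Phi (lt_add_one x)).trans_le (strictMono_Phi.monotone.ge_of_tendsto tendsto_Phi_atTop _)

lemma mul_phi_div_lt_one_sub_Phi (κ : ℝ) : κ * phi κ / (1 + κ ^ 2) < 1 - Phi κ := by
  set D := fun x : ℝ => 1 - Phi x - x * phi x / (1 + x ^ 2)
  have hD' (x : ℝ) : HasDerivAt D (-2 * phi x / (1 + x ^ 2) ^ 2) x := by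
    have h := (hasDerivAt_one_sub_Phi x).sub <| ((hasDerivAt_id x).mul (hasDerivAt_phi x)).div
      ((hasDerivAt_pow 2 x).const_add 1) (by positivity)
    refine h.congr_deriv ?_
    simp only [id, Pi.mul_apply]
    field_simp
    ring
  have hD_anti : StrictAnti D := strictAnti_of_deriv_neg fun x => by
    rw [(hD' x).deriv]
    exact div_neg_of_neg_of_pos (by linarith [phi_pos x]) (by positivity)
  have hD_lim : Tendsto D atTop (𝓝 0) := by
    have hsmall : Tendsto (fun x => x * phi x / (1 + x ^ 2)) atTop (𝓝 0) := by
      refine squeeze_zero' ?_ ?_ tendsto_phi_atTop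
      · filter_upwards [eventually_ge_atTop 0] with x hx
        have := phi_pos x
        positivity
      · filter_upwards [eventually_ge_atTop 0] with x hx
        have hx' : x ≤ 1 + x ^ 2 := by nlinarith [sq_nonneg (x - 1)]
        rw [div_le_iff₀ (by positivity)]
        nlinarith [phi_pos x]
    simpa using tendsto_one_sub_Phi_atTop.sub hsmall
  simpa [D] using (hD_anti.strictAntiOn (Ici κ)).lt_of_tendsto_atTop hD_lim

lemma mul_one_sub_Phi_lt_phi {κ : ℝ} (hκ : 0 < κ) : κ * (1 - Phi κ) < phi κ := by
  set D := fun x : ℝ => phi x / x - (1 - Phi x)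
  have hD' {x : ℝ} (hx : x ≠ 0) : HasDerivAt D (-phi x / x ^ 2) x := by
    refine (((hasDerivAt_phi x).div (hasDerivAt_id x) hx).sub (hasDerivAt_one_sub_Phi x)).congr_deriv ?_
    simp only [id]
    field_simp
    ring
  have hD_anti : StrictAntiOn D (Ici κ) := by
    refine strictAntiOn_of_deriv_neg (convex_Ici κ)
      (fun x hx => (hD' (hκ.trans_le hx).ne').continuousAt.continuousWithinAt) fun x hx => ?_
    rw [interior_Ici] at hx
    rw [(hD' (hκ.trans hx).ne').deriv]
    exact div_neg_of_neg_of_pos (by linarith [phi_pos x]) (pow_pos (hκ.trans hx) 2)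
  have hD_lim : Tendsto D atTop (𝓝 0) := by
    simpa using (tendsto_phi_atTop.div_atTop tendsto_id).sub tendsto_one_sub_Phi_atTop
  have h := hD_anti.lt_of_tendsto_atTop hD_lim
  rw [sub_pos, lt_div_iff₀ hκ] at h
  linarith

lemma hasDerivAt_g (κ : ℝ) :
    HasDerivAt g (((1 + κ ^ 2) * (1 - Phi κ) - κ * phi κ) / phi κ) κ := by
  refine (((hasDerivAt_id κ).mul (hasDerivAt_one_sub_Phi κ)).div (hasDerivAt_phi κ)
    (phi_pos κ).ne').congr_deriv ?_
  simp only [id, Pi.mul_apply]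
  field_simp [(phi_pos κ).ne']
  ring

lemma strictMono_g : StrictMono g := by
  refine strictMono_of_deriv_pos fun κ => ?_
  have h := mul_phi_div_lt_one_sub_Phi κ
  rw [div_lt_iff₀ (by positivity)] at h
  rw [(hasDerivAt_g κ).deriv]
  exact div_pos (by linarith) (phi_pos κ)

lemma tendsto_g_atBot : Tendsto g atBot atBot := by
  have hslope : 0 < (1 - Phi 0) / phi 0 := div_pos (sub_pos.2 (Phi_lt_one 0)) (phi_pos 0)
  refine tendsto_atBot_mono' atBot ?_ (tendsto_id.const_mul_atBot hslope)
  filter_upwards [eventually_le_atBot 0] with κ hκ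
  have hQ : 1 - Phi 0 ≤ 1 - Phi κ := by linarith [strictMono_Phi.monotone hκ]
  have hκQ : κ * (1 - Phi 0) ≤ 0 := mul_nonpos_of_nonpos_of_nonneg hκ (sub_pos.2 (Phi_lt_one 0)).le
  calc g κ ≤ κ * (1 - Phi 0) / phi κ :=
        div_le_div_of_nonneg_right (mul_le_mul_of_nonpos_left hQ hκ) (phi_pos κ).le
    _ ≤ κ * (1 - Phi 0) / phi 0 := by
        rw [div_le_div_iff₀ (phi_pos κ) (phi_pos 0)]
        exact mul_le_mul_of_nonpos_left (phi_le_phi_zero κ) hκQ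
    _ = (1 - Phi 0) / phi 0 * id κ := by
        rw [id]
        ring

lemma tendsto_sq_div_one_add_sq_atTop : Tendsto (fun x : ℝ => x ^ 2 / (1 + x ^ 2)) atTop (𝓝 1) := by
  have h : Tendsto (fun x : ℝ => 1 - (1 + x ^ 2)⁻¹) atTop (𝓝 1) := by
    simpa using (tendsto_inv_atTop_zero.comp
      (tendsto_atTop_add_const_left _ 1 (tendsto_pow_atTop (α := ℝ) two_ne_zero))).const_sub 1
  refine h.congr fun x => ?_
  field_simp
  ring

lemma tendsto_g_atTop : Tendsto g atTop (𝓝 1) := by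
  refine tendsto_of_tendsto_of_tendsto_of_le_of_le' tendsto_sq_div_one_add_sq_atTop
    tendsto_const_nhds ?_ ?_
  · filter_upwards [eventually_gt_atTop 0] with κ hκ
    have h := mul_phi_div_lt_one_sub_Phi κ
    rw [div_lt_iff₀ (by positivity)] at h
    rw [g, div_le_div_iff₀ (by positivity) (phi_pos κ)]
    nlinarith [phi_pos κ]
  · filter_upwards [eventually_gt_atTop 0] with κ hκ
    rw [g, div_le_one (phi_pos κ)]
    exact (mul_one_sub_Phi_lt_phi hκ).le

/-- g is strictly increasing, g(0)=0, g → -∞ at -∞ and g → 1 at +∞. -/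
theorem stmt0 :
    StrictMono g ∧ g 0 = 0 ∧
    Filter.Tendsto g Filter.atBot Filter.atBot ∧
    Filter.Tendsto g Filter.atTop (nhds 1) :=
  ⟨strictMono_g, by simp [g], tendsto_g_atBot, tendsto_g_atTop⟩
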